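/- arXiv:2004.12777 — 5 statements merged into one kernel-verified Lean document; each statement's English description precedes it below -/
import Mathlib

section
/- Let Γ be a countable group and μ a probability measure on Γ. For γ₁, γ₂ ∈ Γ and r in [0, R_μ] (where R_μ is the radius of convergence of the Green function power series), the derivative of r·G(γ₁,γ₂|r) equals the sum over γ ∈ Γ of G(γ₁,γ|r)·G(γ,γ₂|r). -/
open scoped ENNReal Classical

/-- `n`-fold convolution power of a measure `μ` on a group `Γ`, valued in `[0,∞]`. -/
noncomputable def convPow {Γ : Type*} [Group Γ] (μ : Γ → ℝ≥0∞) : ℕ → Γ → ℝ≥0∞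
  | 0 => fun γ => if γ = 1 then 1 else 0
  | n + 1 => fun γ => ∑' x : Γ, μ x * convPow μ n (x⁻¹ * γ)

/-- Green function `G(γ₁,γ₂|r) = Σ_{n≥0} r^n μ^{*n}(γ₁⁻¹γ₂)`. -/
noncomputable def Green {Γ : Type*} [Group Γ] (μ : Γ → ℝ≥0∞) (r : ℝ≥0∞) (γ₁ γ₂ : Γ) : ℝ≥0∞ :=
  ∑' n : ℕ, r ^ n * convPow μ n (γ₁⁻¹ * γ₂)

/-- The radius of convergence `R_μ` of the Green function power series. -/
noncomputable def specRadius {Γ : Type*} [Group Γ] (μ : Γ → ℝ≥0∞) : ℝ≥0∞ :=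
  sSup {r : ℝ≥0∞ | Green μ r 1 1 ≠ ⊤}

lemma convPow_add {Γ : Type*} [Group Γ] (μ : Γ → ℝ≥0∞) (k m : ℕ) (g : Γ) :
    convPow μ (k + m) g = ∑' x : Γ, convPow μ k x * convPow μ m (x⁻¹ * g) := by
  induction k generalizing g with
  | zero =>
    simp only [Nat.zero_add]
    rw [show (∑' x : Γ, convPow μ 0 x * convPow μ m (x⁻¹ * g))
        = convPow μ 0 1 * convPow μ m (1⁻¹ * g) from
      tsum_eq_single 1 (by intro x hx; simp [convPow, hx])]
    simp [convPow]
  | succ k ih =>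
    have h1 : k + 1 + m = (k + m) + 1 := by ring
    rw [h1, show convPow μ ((k+m)+1) g = ∑' x : Γ, μ x * convPow μ (k+m) (x⁻¹ * g) from rfl]
    have h2 : ∀ x : Γ, μ x * convPow μ (k+m) (x⁻¹ * g)
        = ∑' z : Γ, μ x * (convPow μ k (x⁻¹ * z) * convPow μ m (z⁻¹ * g)) := by
      intro x
      rw [ih (x⁻¹ * g), ← ENNReal.tsum_mul_left]
      rw [← Equiv.tsum_eq (Equiv.mulLeft x) fun z => μ x * (convPow μ k (x⁻¹ * z) * convPow μ m (z⁻¹ * g))]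
      congr 1; funext y
      simp [mul_assoc, Equiv.mulLeft]
    simp only [h2]
    rw [ENNReal.tsum_comm]
    congr 1; funext z
    rw [show convPow μ (k+1) z = ∑' x : Γ, μ x * convPow μ k (x⁻¹ * z) from rfl,
      ← ENNReal.tsum_mul_right]
    congr 1; funext x; ring

/-- Reindexing `ℕ × ℕ` by `(n, k) ↦ (k, n - k)` with `k ≤ n`. -/
def sigmaEquiv : (Σ n : ℕ, Fin (n + 1)) ≃ ℕ × ℕ where
  toFun s := (s.2, s.1 - s.2)
  invFun p := ⟨p.1 + p.2, ⟨p.1, by omega⟩⟩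
  left_inv := by
    rintro ⟨n, k⟩
    have hk := k.isLt
    beta_reduce
    refine Sigma.ext ?_ ?_
    · show (k : ℕ) + (n - (k : ℕ)) = n; omega
    · exact (Fin.heq_ext_iff (by simp; omega)).2 rfl
  right_inv := by rintro ⟨a, b⟩; simp

/-- The derivative of `r ↦ r·G(γ₁,γ₂|r)`, i.e. `Σ_n (n+1) μ^{*n}(γ₁⁻¹γ₂) r^n`, equals
`Σ_γ G(γ₁,γ|r) G(γ,γ₂|r)`, as an identity in `[0,∞]`. -/
theorem green_first_derivative {Γ : Type*} [Group Γ] [Countable Γ]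
    (μ : Γ → ℝ≥0∞) (hμ : ∑' γ : Γ, μ γ = 1)
    (γ₁ γ₂ : Γ) (r : ℝ≥0∞) (hr : r ≤ specRadius μ) :
    ∑' n : ℕ, ((n : ℝ≥0∞) + 1) * r ^ n * convPow μ n (γ₁⁻¹ * γ₂)
      = ∑' γ : Γ, Green μ r γ₁ γ * Green μ r γ γ₂ := by
  have key : ∀ γ : Γ, Green μ r γ₁ γ * Green μ r γ γ₂
      = ∑' j : ℕ, ∑' k : ℕ, r ^ j * convPow μ j (γ₁⁻¹ * γ) * (r ^ k * convPow μ k (γ⁻¹ * γ₂)) := by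
    intro γ
    rw [Green, Green, ← ENNReal.tsum_mul_right]
    congr 1; funext j
    rw [← ENNReal.tsum_mul_left]
  simp only [key]
  rw [ENNReal.tsum_comm]
  have swap : ∀ j : ℕ, (∑' (γ : Γ) (k : ℕ), r ^ j * convPow μ j (γ₁⁻¹ * γ) * (r ^ k * convPow μ k (γ⁻¹ * γ₂)))
      = ∑' (k : ℕ) (γ : Γ), r ^ j * convPow μ j (γ₁⁻¹ * γ) * (r ^ k * convPow μ k (γ⁻¹ * γ₂)) :=
    fun j => ENNReal.tsum_comm
  simp only [swap]
  have inner : ∀ j k : ℕ, (∑' γ : Γ, r ^ j * convPow μ j (γ₁⁻¹ * γ) * (r ^ k * convPow μ k (γ⁻¹ * γ₂)))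
      = r ^ (j + k) * convPow μ (j + k) (γ₁⁻¹ * γ₂) := by
    intro j k
    have h : ∀ γ : Γ, r ^ j * convPow μ j (γ₁⁻¹ * γ) * (r ^ k * convPow μ k (γ⁻¹ * γ₂))
        = r ^ (j + k) * (convPow μ j ((Equiv.mulLeft γ₁⁻¹) γ)
            * convPow μ k (((Equiv.mulLeft γ₁⁻¹) γ)⁻¹ * (γ₁⁻¹ * γ₂))) := by
      intro γ
      simp only [Equiv.coe_mulLeft]
      rw [show (γ₁⁻¹ * γ)⁻¹ * (γ₁⁻¹ * γ₂) = γ⁻¹ * γ₂ by group, pow_add]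
      ring
    rw [tsum_congr h, ENNReal.tsum_mul_left, Equiv.tsum_eq (Equiv.mulLeft γ₁⁻¹)
      (fun x => convPow μ j x * convPow μ k (x⁻¹ * (γ₁⁻¹ * γ₂))), ← convPow_add]
  simp only [inner]
  rw [← ENNReal.tsum_prod, ← Equiv.tsum_eq sigmaEquiv
    (fun p => r ^ (p.1 + p.2) * convPow μ (p.1 + p.2) (γ₁⁻¹ * γ₂)), ENNReal.tsum_sigma']
  congr 1; funext n
  have : ∀ k : Fin (n + 1),
      r ^ ((sigmaEquiv ⟨n, k⟩).1 + (sigmaEquiv ⟨n, k⟩).2)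
        * convPow μ ((sigmaEquiv ⟨n, k⟩).1 + (sigmaEquiv ⟨n, k⟩).2) (γ₁⁻¹ * γ₂)
      = r ^ n * convPow μ n (γ₁⁻¹ * γ₂) := by
    intro k
    have hk := k.isLt
    have h : (sigmaEquiv ⟨n, k⟩).1 + (sigmaEquiv ⟨n, k⟩).2 = n := by
      simp only [sigmaEquiv, Equiv.coe_fn_mk]; omega
    rw [h]
  rw [tsum_congr this, tsum_fintype, Finset.sum_const, Finset.card_univ, Fintype.card_fin,
    nsmul_eq_mul]
  push_cast
  ring
end

section
/- Define integer coefficients f_{j,k} for 0 ≤ j ≤ k by f_{0,k} = k!, f_{k,k} = 1, and the recursion f_{j,k+1} = f_{j-1,k} + (k+j+1)·f_{j,k} for 1 ≤ j ≤ k. Then there exist constants c ≥ 1 and C ≥ 1 such that f_{j,k}·j!/k! ≤ c·C^{j+k} for all 0 ≤ j ≤ k. -/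
/-!
With `g_{j,k} = f_{j,k} j!` the recursion reads
`g_{j+1,k+1} = (j+1) g_{j,k} + (k+j+2) g_{j+1,k}`, whose coefficients are at most `k+1` and
`2(k+1)`. So the bound `g_{j,k} ≤ k! C^{j+k}` on row `k` yields on row `k+1` the bound
`(k+1)! C^{j+k} (1 + 2C)`, which is at most the required `(k+1)! C^{j+k+2}` once `1 + 2C ≤ C²`.
-/

/-- The coefficients `f_{j,k}` (for `0 ≤ j ≤ k`, and `0` out of range), defined by
`f_{0,k} = k!`, `f_{k,k} = 1` and `f_{j,k+1} = f_{j-1,k} + (k+j+1) f_{j,k}` for `1 ≤ j ≤ k`. -/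
def fCoeff : ℕ → ℕ → ℕ
  | 0, k => Nat.factorial k
  | _ + 1, 0 => 0
  | j + 1, k + 1 =>
      if j + 1 ≤ k then fCoeff j k + (k + j + 2) * fCoeff (j + 1) k
      else if j = k then 1 else 0

open Nat

theorem fCoeff_zero_left (k : ℕ) : fCoeff 0 k = k ! := by
  rw [fCoeff]

theorem fCoeff_self (k : ℕ) : fCoeff k k = 1 := by
  cases k with
  | zero => rfl
  | succ k => simp [fCoeff]

theorem fCoeff_succ_succ {j k : ℕ} (h : j + 1 ≤ k) :
    fCoeff (j + 1) (k + 1) = fCoeff j k + (k + j + 2) * fCoeff (j + 1) k := by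
  simp [fCoeff, h]

theorem fCoeff_succ_succ_mul_factorial {j k : ℕ} (h : j + 1 ≤ k) :
    (fCoeff (j + 1) (k + 1) * (j + 1)! : ℝ) =
      (j + 1) * (fCoeff j k * j !) + (k + j + 2) * (fCoeff (j + 1) k * (j + 1)!) := by
  rw [fCoeff_succ_succ h, Nat.factorial_succ j]
  push_cast
  ring

theorem fCoeff_mul_factorial_le {C : ℝ} (hC : 1 ≤ C) (hC₂ : 1 + 2 * C ≤ C ^ 2) :
    ∀ k j : ℕ, j ≤ k → (fCoeff j k * j ! : ℝ) ≤ k ! * C ^ (j + k) := by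
  intro k
  induction k with
  | zero =>
    intro j hj
    obtain rfl : j = 0 := Nat.le_zero.mp hj
    simp [fCoeff_zero_left]
  | succ k ih =>
    rintro (_ | j) hj
    · simpa [fCoeff_zero_left] using
        le_mul_of_one_le_right (by positivity) (one_le_pow₀ hC (n := 0 + (k + 1)))
    rcases Nat.lt_or_ge j k with hjk | hjk
    · calc (fCoeff (j + 1) (k + 1) * (j + 1)! : ℝ)
          = (j + 1) * (fCoeff j k * j !) + (k + j + 2) * (fCoeff (j + 1) k * (j + 1)!) :=
            fCoeff_succ_succ_mul_factorial hjk
        _ ≤ (k + 1) * (k ! * C ^ (j + k)) + (2 * (k + 1)) * (k ! * C ^ (j + 1 + k)) := by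
            gcongr ?_ * ?_ + ?_ * ?_
            · exact_mod_cast hj
            · exact ih j hjk.le
            · exact_mod_cast (by omega : k + j + 2 ≤ 2 * (k + 1))
            · exact ih (j + 1) hjk
        _ = (k + 1) * (k ! * C ^ (j + k)) * (1 + 2 * C) := by ring
        _ ≤ (k + 1) * (k ! * C ^ (j + k)) * C ^ 2 := by gcongr
        _ = (k + 1)! * C ^ (j + 1 + (k + 1)) := by
            rw [Nat.factorial_succ]
            push_cast
            ring
    · obtain rfl : j = k := by omega
      simpa [fCoeff_self] using
        le_mul_of_one_le_right (by positivity) (one_le_pow₀ hC (n := j + 1 + (j + 1)))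

/-- There exist `c ≥ 1` and `C ≥ 1` with `f_{j,k}·j!/k! ≤ c·C^{j+k}` for all `0 ≤ j ≤ k`. -/
theorem fCoeff_subexponential :
    ∃ c C : ℝ, 1 ≤ c ∧ 1 ≤ C ∧ ∀ j k : ℕ, j ≤ k →
      (fCoeff j k : ℝ) * (Nat.factorial j : ℝ) / (Nat.factorial k : ℝ) ≤ c * C ^ (j + k) := by
  refine ⟨1, 3, le_rfl, by norm_num, fun j k hjk => ?_⟩
  rw [div_le_iff₀ (by positivity), one_mul, mul_comm _ (k ! : ℝ)]
  exact fCoeff_mul_factorial_le (by norm_num) (by norm_num) k j hjk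
end

section
/- Let C > 0, J₁ > 0 be real constants, and define a sequence (J_j)_{j≥1} by J_j = c·I·[Σ_{l≥2} C^l Σ_{i₁+...+i_l=j} J_{i₁}···J_{i_l} + Σ_{m≥2} Σ_{j₁+...+j_m=j} C^m Π_{p=1}^m (Σ_{l≥1} C^l Σ_{i₁+...+i_l=j_p} J_{i₁}···J_{i_l})] for j ≥ 2 (with indices i_q, j_p ≥ 1 and appropriate positive constants c, I). Then the generating function J(z) = Σ_{j≥1} J_j z^j satisfies the algebraic equation a·J(z)³ - b(z)·J(z)² + c(z)·J(z) - z = 0 formally, where a = C(C+C²)(1/J₁ + C), b(z) = (2C+C²)/J₁ + C² + C⁴ + (C²+C³)z, c(z) = 1/J₁ + (2C+C²)z; consequently, if at z=0 the cubic a x³ - b(0)x² + c(0)x = 0 has three distinct roots, then J(z) has positive radius of convergence and there exist d ≥ 0, D > 0 with J_j ≤ d·D^j for all j. -/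
/-!
Write `P = mk J` and `K = mk (compK J C)`. Since `C P` has no constant term,
`Σ_{l ≥ k} (C P)^l = (C P)^k / (1 - C P)`, so `K = C P / (1 - C P)` and the recursion reads
`P = J₁ X + J₁ ((C P)² / (1 - C P) + (C K)² / (1 - C K))`; eliminating `K` and clearing
denominators gives the cubic.

The exponential bound comes from a Catalan majorant. The weight `w_j = Cat_{j-1} μ^j` satisfies
`Σ_{i+k=j} w_i w_k ≤ w_j` (Segner's recurrence), so if `|J_i| ≤ ε w_i` for `i < j`, every
composition sum into `l` parts is at most `ε^l w_j`. For `ε` small the geometric sums over `l`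
and `m` in the recursion give back `|J_j| ≤ ε w_j`, with `μ = J₁ / ε`; finally `Cat_n ≤ 4^n`.
-/

/-- `compP J l j = Σ_{i₁+⋯+i_l = j, i_q ≥ 1} J_{i₁} ⋯ J_{i_l}`, the sum over compositions
of `j` into `l` positive parts of the product of the `J`'s. -/
noncomputable def compP (J : ℕ → ℝ) : ℕ → ℕ → ℝ
  | 0, j => if j = 0 then 1 else 0
  | l + 1, j => ∑ i ∈ Finset.Icc 1 j, J i * compP J l (j - i)

/-- `compK J C q = Σ_{l≥1} C^l Σ_{i₁+⋯+i_l=q} J_{i₁}⋯J_{i_l}` (the sum is finite since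
compositions of `q` have at most `q` parts). -/
noncomputable def compK (J : ℕ → ℝ) (C : ℝ) (q : ℕ) : ℝ :=
  ∑' l : ℕ, if 1 ≤ l then C ^ l * compP J l q else 0

/-- `compQ J C m j = Σ_{j₁+⋯+j_m=j, j_p ≥ 1} K_{j₁} ⋯ K_{j_m}` where `K = compK J C`. -/
noncomputable def compQ (J : ℕ → ℝ) (C : ℝ) : ℕ → ℕ → ℝ
  | 0, j => if j = 0 then 1 else 0
  | m + 1, j => ∑ i ∈ Finset.Icc 1 j, compK J C i * compQ J C m (j - i)

open Finset hiding mk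

def CompositionRecursion (C : ℝ) (J : ℕ → ℝ) : Prop :=
  ∀ j : ℕ, 2 ≤ j →
    J j = J 1 * ((∑' l : ℕ, if 2 ≤ l then C ^ l * compP J l j else 0) +
      ∑' m : ℕ, if 2 ≤ m then C ^ m * compQ J C m j else 0)

theorem compP_eq_zero_of_lt (J : ℕ → ℝ) {l q : ℕ} (h : q < l) : compP J l q = 0 := by
  induction l generalizing q with
  | zero => omega
  | succ l ih => exact sum_eq_zero fun i hi ↦ by rw [ih (by grind), mul_zero]

theorem compP_one (J : ℕ → ℝ) (q : ℕ) : compP J 1 q = if q = 0 then 0 else J q := by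
  rcases q with _ | q
  · simp [compP]
  · rw [compP, sum_eq_single_of_mem (q + 1) (by simp) fun i hi hne ↦ ?_] <;> simp [compP]
    grind

theorem compQ_eq_compP_compK (J : ℕ → ℝ) (C : ℝ) (m j : ℕ) :
    compQ J C m j = compP (compK J C) m j := by
  induction m generalizing j with
  | zero => rfl
  | succ m ih => simp only [compQ, compP, ih]

theorem compK_zero (J : ℕ → ℝ) (C : ℝ) : compK J C 0 = 0 := by
  refine (tsum_congr fun l ↦ ?_).trans tsum_zero
  split_ifs with hl
  · rw [compP_eq_zero_of_lt J hl, mul_zero]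
  · rfl

theorem tsum_ite_le_eq_sum_range {f : ℕ → ℝ} {k n : ℕ} (hf : ∀ l, n + k ≤ l → f l = 0) :
    (∑' l, if k ≤ l then f l else 0) = ∑ i ∈ range n, f (i + k) := by
  rw [tsum_eq_sum (s := Ico k (n + k)) fun l hl ↦ ?_, sum_ite_of_true fun l hl ↦ (mem_Ico.mp hl).1,
    sum_Ico_eq_sum_range, Nat.add_sub_cancel]
  · simp only [add_comm]
  · grind

theorem geom_sum_le_two {r : ℝ} (hr0 : 0 ≤ r) (hr : r ≤ 1 / 2) (n : ℕ) :
    ∑ i ∈ range n, r ^ i ≤ 2 := by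
  have h := geom_sum_Ico_le_of_lt_one (m := 0) (n := n) hr0 (by linarith)
  rw [Nat.Ico_zero_eq_range, pow_zero] at h
  exact h.trans (by rw [div_le_iff₀ (by linarith)]; linarith)

theorem tsum_ite_compP_eq_zero (J : ℕ → ℝ) (C : ℝ) {k n : ℕ} (h : n < k) :
    (∑' l, if k ≤ l then C ^ l * compP J l n else 0) = 0 :=
  (tsum_ite_le_eq_sum_range (n := 0) fun l hl ↦ by
    rw [compP_eq_zero_of_lt J (by omega), mul_zero]).trans (sum_range_zero _)

section GeneratingFunction

open PowerSeries

open PowerSeries.WithPiTopology in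
theorem PowerSeries.one_sub_mul_mk_tsum_ite_coeff_pow {R : Type*} [CommRing R]
    [TopologicalSpace R] [IsTopologicalRing R] [T2Space R] {A : R⟦X⟧}
    (hA : constantCoeff A = 0) (k : ℕ) :
    (1 - A) * mk (fun n ↦ ∑' l, if k ≤ l then coeff n (A ^ l) else 0) = A ^ k := by
  have hsum : HasSum (fun l ↦ if k ≤ l then A ^ l else 0) (A ^ k * ∑' i, A ^ i) := by
    rw [← hasSum_nat_add_iff' k, sum_ite_of_false fun l hl ↦ not_le.mpr (mem_range.mp hl)]
    simpa [pow_add, mul_comm] using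
      (summable_pow_of_constantCoeff_eq_zero hA).hasSum.mul_left (A ^ k)
  have hmk : mk (fun n ↦ ∑' l, if k ≤ l then coeff n (A ^ l) else 0) = A ^ k * ∑' i, A ^ i := by
    ext n
    rw [coeff_mk]
    refine (((hasSum_iff_hasSum_coeff R).mp hsum n).congr_fun fun l ↦ ?_).tsum_eq
    split_ifs <;> simp
  rw [hmk, mul_left_comm, one_sub_mul_tsum_pow_of_constantCoeff_eq_zero hA, mul_one]

theorem coeff_mk_pow {J : ℕ → ℝ} (hJ0 : J 0 = 0) (l n : ℕ) :
    coeff n (mk J ^ l) = compP J l n := by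
  induction l generalizing n with
  | zero => simp [compP, coeff_one]
  | succ l ih =>
    rw [pow_succ', coeff_mul, Nat.sum_antidiagonal_eq_sum_range_succ_mk, sum_range_succ', compP,
      ← Ico_add_one_right_eq_Icc, sum_Ico_eq_sum_range]
    simp [ih, hJ0, add_comm]

theorem coeff_C_mul_mk_pow {J : ℕ → ℝ} (hJ0 : J 0 = 0) (c : ℝ) (l n : ℕ) :
    coeff n ((C c * mk J) ^ l) = c ^ l * compP J l n := by
  rw [mul_pow, ← map_pow, coeff_C_mul, coeff_mk_pow hJ0]

theorem cubic_of_geometric_relations {R : Type*} [CommRing R] {c u z P K F G : R}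
    (hK : (1 - c * P) * K = c * P) (hF : (1 - c * P) * F = (c * P) ^ 2)
    (hG : (1 - c * K) * G = (c * K) ^ 2) (hP : P = u * z + u * (F + G)) :
    (P - u * z) * (1 - c * P) * (1 - (c + c ^ 2) * P)
      = u * c ^ 2 * P ^ 2 * (1 - (c + c ^ 2) * P) + u * c ^ 4 * P ^ 2 := by
  have hFG : (P - u * z) * (1 - c * P) * (1 - c * K)
      = u * c ^ 2 * P ^ 2 * (1 - c * K) + u * c ^ 2 * K ^ 2 * (1 - c * P) := by
    linear_combination ((1 - c * P) * (1 - c * K)) * hP + (u * (1 - c * K)) * hF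
      + (u * (1 - c * P)) * hG
  linear_combination (1 - c * P) * hFG
    + (c * ((P - u * z) * (1 - c * P) - u * c ^ 2 * P ^ 2)
        + u * c ^ 2 * (K * (1 - c * P) + c * P)) * hK

theorem generating_function_cubic (C : ℝ) (J : ℕ → ℝ) (hJ0 : J 0 = 0) (hJ1 : J 1 ≠ 0)
    (hrec : CompositionRecursion C J) :
    PowerSeries.C (R := ℝ) (C * (C + C ^ 2) * (1 / J 1 + C)) * (PowerSeries.mk J) ^ 3
      - (PowerSeries.C (R := ℝ) ((2 * C + C ^ 2) / J 1 + C ^ 2 + C ^ 4)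
          + PowerSeries.C (R := ℝ) (C ^ 2 + C ^ 3) * PowerSeries.X) * (PowerSeries.mk J) ^ 2
      + (PowerSeries.C (R := ℝ) (1 / J 1) + PowerSeries.C (R := ℝ) (2 * C + C ^ 2) * PowerSeries.X)
          * PowerSeries.mk J
      - PowerSeries.X = 0 := by
  set F : ℕ → ℝ := fun n ↦ ∑' l, if 2 ≤ l then C ^ l * compP J l n else 0
  set G : ℕ → ℝ := fun n ↦ ∑' m, if 2 ≤ m then C ^ m * compQ J C m n else 0
  have hA : constantCoeff (PowerSeries.C C * mk J) = 0 := by simp [hJ0]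
  have hK : (1 - PowerSeries.C C * mk J) * mk (compK J C) = PowerSeries.C C * mk J := by
    convert one_sub_mul_mk_tsum_ite_coeff_pow hA 1 using 3
    · ext n; simp [compK, coeff_C_mul_mk_pow hJ0]
    · rw [pow_one]
  have hF : (1 - PowerSeries.C C * mk J) * mk F = (PowerSeries.C C * mk J) ^ 2 := by
    simpa [coeff_C_mul_mk_pow hJ0] using one_sub_mul_mk_tsum_ite_coeff_pow hA 2
  have hG : (1 - PowerSeries.C C * mk (compK J C)) * mk G
      = (PowerSeries.C C * mk (compK J C)) ^ 2 := by
    simpa [G, coeff_C_mul_mk_pow (compK_zero J C), compQ_eq_compP_compK] using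
      one_sub_mul_mk_tsum_ite_coeff_pow (A := PowerSeries.C C * mk (compK J C))
        (by simp [compK_zero]) 2
  have hP : mk J = PowerSeries.C (J 1) * X + PowerSeries.C (J 1) * (mk F + mk G) := by
    ext n
    rcases n with _ | _ | n
    · simp [hJ0, F, G, compQ_eq_compP_compK, tsum_ite_compP_eq_zero]
    · simp [F, G, compQ_eq_compP_compK, tsum_ite_compP_eq_zero]
    · simp [F, G, hrec (n + 2) (by omega)]
  have key := cubic_of_geometric_relations hK hF hG hP
  have hinv : PowerSeries.C (1 / J 1) * PowerSeries.C (J 1) = 1 := by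
    rw [← map_mul, one_div_mul_cancel hJ1, map_one]
  rw [div_eq_mul_one_div (2 * C + C ^ 2) (J 1)]
  simp only [map_add, map_mul, map_pow, map_ofNat]
  set c := PowerSeries.C C
  set P := mk J
  linear_combination PowerSeries.C (1 / J 1) * key
    + (X * (1 - c * P) * (1 - (c + c ^ 2) * P) + c ^ 2 * P ^ 2 * (1 - (c + c ^ 2) * P)
        + c ^ 4 * P ^ 2) * hinv

end GeneratingFunction

noncomputable def catalanWeight (μ : ℝ) : ℕ → ℝ
  | 0 => 0
  | n + 1 => catalan n * μ ^ (n + 1)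

theorem catalanWeight_nonneg {μ : ℝ} (hμ : 0 ≤ μ) (n : ℕ) : 0 ≤ catalanWeight μ n := by
  cases n <;> simp only [catalanWeight] <;> positivity

theorem catalanWeight_le {μ : ℝ} (hμ : 0 ≤ μ) (n : ℕ) : catalanWeight μ n ≤ (4 * μ) ^ n := by
  cases n with
  | zero => simp [catalanWeight]
  | succ n =>
    have hcat : catalan n ≤ 4 ^ (n + 1) :=
      calc catalan n ≤ (n + 1) * catalan n := Nat.le_mul_of_pos_left _ n.succ_pos
        _ = n.centralBinom := succ_mul_catalan_eq_centralBinom n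
        _ ≤ 4 ^ n := n.centralBinom_le_four_pow
        _ ≤ 4 ^ (n + 1) := Nat.pow_le_pow_right (by norm_num) n.le_succ
    rw [catalanWeight, mul_pow]
    gcongr
    exact_mod_cast hcat

theorem sum_catalanWeight_mul_le {μ : ℝ} (hμ : 0 ≤ μ) (q : ℕ) :
    ∑ i ∈ Icc 1 q, catalanWeight μ i * catalanWeight μ (q - i) ≤ catalanWeight μ q := by
  rcases q with _ | _ | n
  · simp [catalanWeight]
  · simpa [catalanWeight] using hμ
  rw [← Ico_add_one_right_eq_Icc, sum_Ico_eq_sum_range, Nat.add_sub_cancel, sum_range_succ,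
    show n + 1 + 1 - (1 + (n + 1)) = 0 by omega, catalanWeight, mul_zero, add_zero]
  refine le_of_eq ?_
  calc ∑ k ∈ range (n + 1), catalanWeight μ (1 + k) * catalanWeight μ (n + 1 + 1 - (1 + k))
      = ∑ k ∈ range (n + 1), (catalan k * catalan (n - k) : ℝ) * μ ^ (n + 2) := by
        refine sum_congr rfl fun k hk ↦ ?_
        rw [show 1 + k = k + 1 by ring,
          show n + 1 + 1 - (k + 1) = n - k + 1 by grind, catalanWeight, catalanWeight,
          show n + 2 = (k + 1) + (n - k + 1) by grind, pow_add]
        ring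
    _ = catalanWeight μ (n + 1 + 1) := by
        rw [catalanWeight, catalan_succ, ← sum_mul, ← Fin.sum_univ_eq_sum_range
          (fun k ↦ (catalan k * catalan (n - k) : ℝ))]
        push_cast
        rfl

section Majorant

variable {a w : ℕ → ℝ} {ε : ℝ} {N : ℕ}

theorem abs_compP_le (hw : ∀ i, 0 ≤ w i)
    (hconv : ∀ q, ∑ i ∈ Icc 1 q, w i * w (q - i) ≤ w q) (hε : 0 ≤ ε)
    (ha : ∀ i, 0 < i → i < N → |a i| ≤ ε * w i) (l : ℕ) {q : ℕ} (hq : q < N + l) :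
    |compP a (l + 1) q| ≤ ε ^ (l + 1) * w q := by
  induction l generalizing q with
  | zero =>
    rw [compP_one]
    split_ifs with h
    · simpa using mul_nonneg hε (hw q)
    · simpa using ha q (Nat.pos_of_ne_zero h) hq
  | succ l ih =>
    have hterm : ∀ i ∈ Icc 1 q, |a i * compP a (l + 1) (q - i)|
        ≤ ε ^ (l + 2) * (w i * w (q - i)) := by
      intro i hi
      rcases lt_or_ge (q - i) (l + 1) with hlt | hge
      · rw [compP_eq_zero_of_lt a hlt, mul_zero, abs_zero]
        exact mul_nonneg (pow_nonneg hε _) (mul_nonneg (hw i) (hw _))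
      have hi' := mem_Icc.mp hi
      calc |a i * compP a (l + 1) (q - i)|
          ≤ (ε * w i) * (ε ^ (l + 1) * w (q - i)) := by
            rw [abs_mul]
            exact mul_le_mul (ha i hi'.1 (by omega)) (ih (by omega)) (abs_nonneg _)
              (mul_nonneg hε (hw i))
        _ = ε ^ (l + 2) * (w i * w (q - i)) := by ring
    calc |compP a (l + 2) q|
        ≤ ∑ i ∈ Icc 1 q, ε ^ (l + 2) * (w i * w (q - i)) :=
          (abs_sum_le_sum_abs _ _).trans (sum_le_sum hterm)
      _ ≤ ε ^ (l + 2) * w q := by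
          rw [← mul_sum]
          exact mul_le_mul_of_nonneg_left (hconv q) (pow_nonneg hε _)

theorem abs_tsum_ite_compP_le (hw : ∀ i, 0 ≤ w i)
    (hconv : ∀ q, ∑ i ∈ Icc 1 q, w i * w (q - i) ≤ w q) (hε : 0 ≤ ε)
    (ha : ∀ i, 0 < i → i < N → |a i| ≤ ε * w i) {C : ℝ} (hC : 0 ≤ C) (hCε : C * ε ≤ 1 / 2)
    (k : ℕ) {q : ℕ} (hq : q < N + k) :
    |∑' l, if k + 1 ≤ l then C ^ l * compP a l q else 0| ≤ 2 * (C * ε) ^ (k + 1) * w q := by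
  rw [tsum_ite_le_eq_sum_range (n := q) fun l hl ↦ by
    rw [compP_eq_zero_of_lt a (by omega), mul_zero]]
  have hterm : ∀ i ∈ range q, |C ^ (i + (k + 1)) * compP a (i + (k + 1)) q|
      ≤ (C * ε) ^ (k + 1) * w q * (C * ε) ^ i := by
    intro i _
    rw [abs_mul, abs_of_nonneg (pow_nonneg hC _), ← add_assoc]
    calc C ^ (i + k + 1) * |compP a (i + k + 1) q|
        ≤ C ^ (i + k + 1) * (ε ^ (i + k + 1) * w q) :=
          mul_le_mul_of_nonneg_left (abs_compP_le hw hconv hε ha _ (by omega)) (pow_nonneg hC _)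
      _ = (C * ε) ^ (k + 1) * w q * (C * ε) ^ i := by ring
  calc _ ≤ ∑ i ∈ range q, (C * ε) ^ (k + 1) * w q * (C * ε) ^ i :=
        (abs_sum_le_sum_abs _ _).trans (sum_le_sum hterm)
    _ ≤ (C * ε) ^ (k + 1) * w q * 2 := by
        rw [← mul_sum]
        exact mul_le_mul_of_nonneg_left (geom_sum_le_two (by positivity) hCε q)
          (mul_nonneg (pow_nonneg (by positivity) _) (hw q))
    _ = 2 * (C * ε) ^ (k + 1) * w q := by ring

end Majorant

theorem abs_le_catalanWeight_of_recursion {C ε μ : ℝ} {J : ℕ → ℝ} (hC : 0 ≤ C)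
    (hε : 0 ≤ ε) (hμ : 0 ≤ μ) (hJ1 : |J 1| ≤ ε * μ) (hCε : C * ε ≤ 1 / 2)
    (hCε' : C * (2 * C * ε) ≤ 1 / 2) (hJε : |J 1| * (2 * C ^ 2 + 8 * C ^ 4) * ε ≤ 1)
    (hrec : CompositionRecursion C J)
    (j : ℕ) (hj : 0 < j) : |J j| ≤ ε * catalanWeight μ j := by
  induction j using Nat.strong_induction_on with
  | _ j ih =>
  have hw := catalanWeight_nonneg hμ
  have hconv := sum_catalanWeight_mul_le hμ
  obtain rfl | hj2 : j = 1 ∨ 2 ≤ j := by omega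
  · simpa [catalanWeight] using hJ1
  have hJ : ∀ i, 0 < i → i < j → |J i| ≤ ε * catalanWeight μ i := fun i hi hij ↦ ih i hij hi
  have hK : ∀ i, 0 < i → i < j → |compK J C i| ≤ 2 * C * ε * catalanWeight μ i :=
    fun i _ hij ↦ by
      simpa [compK, mul_assoc] using
        abs_tsum_ite_compP_le hw hconv hε hJ hC hCε 0 (q := i) (by omega)
  have hF := abs_tsum_ite_compP_le hw hconv hε hJ hC hCε 1 (q := j) (by omega)
  have hG := abs_tsum_ite_compP_le hw hconv (by positivity) hK hC hCε' 1 (q := j) (by omega)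
  simp only [← compQ_eq_compP_compK] at hG
  calc |J j| ≤ |J 1| * (2 * (C * ε) ^ 2 * catalanWeight μ j
        + 2 * (C * (2 * C * ε)) ^ 2 * catalanWeight μ j) := by
        rw [hrec j hj2, abs_mul]
        exact mul_le_mul_of_nonneg_left ((abs_add_le _ _).trans (add_le_add hF hG)) (abs_nonneg _)
    _ = (|J 1| * (2 * C ^ 2 + 8 * C ^ 4) * ε) * (ε * catalanWeight μ j) := by ring
    _ ≤ ε * catalanWeight μ j :=
        mul_le_of_le_one_left (mul_nonneg hε (hw j)) hJε

theorem exists_le_mul_pow_of_recursion {C : ℝ} {J : ℕ → ℝ} (hC : 0 < C) (hJ1 : 0 < J 1)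
    (hrec : CompositionRecursion C J) :
    ∃ d D : ℝ, 0 ≤ d ∧ 0 < D ∧ ∀ j : ℕ, 1 ≤ j → J j ≤ d * D ^ j := by
  set S := 2 * C + 4 * C ^ 2 + J 1 * (2 * C ^ 2 + 8 * C ^ 4)
  have hJterm : 0 ≤ J 1 * (2 * C ^ 2 + 8 * C ^ 4) := by positivity
  have hS : 0 < S := by positivity
  have hsmall : ∀ t, t ≤ S → t * S⁻¹ ≤ 1 := fun t ht ↦ mul_inv_le_one_of_le₀ ht hS.le
  have hbound := abs_le_catalanWeight_of_recursion hC.le (inv_nonneg.mpr hS.le)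
    (mul_pos hJ1 hS).le (by rw [abs_of_pos hJ1, mul_comm (J 1), inv_mul_cancel_left₀ hS.ne'])
    (by linear_combination hsmall (2 * C) (by simp only [S]; linarith [sq_nonneg C]) / 2)
    (by linear_combination hsmall (4 * C ^ 2) (by simp only [S]; linarith [sq_nonneg C]) / 2)
    (hsmall _ (by rw [abs_of_pos hJ1]; simp only [S]; linarith [sq_nonneg C])) hrec
  refine ⟨S⁻¹, 4 * (J 1 * S), by positivity, by positivity, fun j hj ↦ ?_⟩
  calc J j ≤ |J j| := le_abs_self _
    _ ≤ S⁻¹ * catalanWeight (J 1 * S) j := hbound j hj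
    _ ≤ S⁻¹ * (4 * (J 1 * S)) ^ j :=
        mul_le_mul_of_nonneg_left (catalanWeight_le (by positivity) j) (by positivity)

/-- Generating function argument of Proposition 5.6: if `J_j` satisfies the recursion
`J_j = J₁ [Σ_{l≥2} C^l Σ_{i₁+⋯+i_l=j} J_{i₁}⋯J_{i_l}
        + Σ_{m≥2} Σ_{j₁+⋯+j_m=j} C^m Π_p (Σ_{l≥1} C^l Σ_{i₁+⋯+i_l=j_p} J_{i₁}⋯J_{i_l})]`
for `j ≥ 2`, then `J(z) = Σ J_j z^j` satisfies the formal algebraic equation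
`a J(z)³ - b(z) J(z)² + c(z) J(z) - z = 0` with `a = C(C+C²)(1/J₁+C)`,
`b(z) = (2C+C²)/J₁ + C² + C⁴ + (C²+C³)z` and `c(z) = 1/J₁ + (2C+C²)z`; and if the cubic
`a x³ - b(0) x² + c(0) x = 0` has three distinct (real) roots, then `J_j ≤ d D^j`. -/
theorem generating_function_bound (C : ℝ) (hC : 0 < C) (J : ℕ → ℝ)
    (hJ0 : J 0 = 0) (hJ1 : 0 < J 1)
    (hrec : ∀ j : ℕ, 2 ≤ j →
      J j = J 1 * ((∑' l : ℕ, if 2 ≤ l then C ^ l * compP J l j else 0) +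
        ∑' m : ℕ, if 2 ≤ m then C ^ m * compQ J C m j else 0)) :
    (PowerSeries.C (R := ℝ) (C * (C + C ^ 2) * (1 / J 1 + C)) * (PowerSeries.mk J) ^ 3
      - (PowerSeries.C (R := ℝ) ((2 * C + C ^ 2) / J 1 + C ^ 2 + C ^ 4)
          + PowerSeries.C (R := ℝ) (C ^ 2 + C ^ 3) * PowerSeries.X) * (PowerSeries.mk J) ^ 2
      + (PowerSeries.C (R := ℝ) (1 / J 1) + PowerSeries.C (R := ℝ) (2 * C + C ^ 2) * PowerSeries.X)
          * PowerSeries.mk J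
      - PowerSeries.X = 0) ∧
    ((∃ x₁ x₂ x₃ : ℝ, x₁ ≠ x₂ ∧ x₁ ≠ x₃ ∧ x₂ ≠ x₃ ∧
        (∀ x ∈ ({x₁, x₂, x₃} : Set ℝ),
          (C * (C + C ^ 2) * (1 / J 1 + C)) * x ^ 3
            - ((2 * C + C ^ 2) / J 1 + C ^ 2 + C ^ 4) * x ^ 2 + (1 / J 1) * x = 0)) →
      ∃ d D : ℝ, 0 ≤ d ∧ 0 < D ∧ ∀ j : ℕ, 1 ≤ j → J j ≤ d * D ^ j) :=
  ⟨generating_function_cubic C J hJ0 hJ1.ne' hrec,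
    fun _ ↦ exists_le_mul_pow_of_recursion hC hJ1 hrec⟩
end

section
/- Let (u_m)_{m≥0} be a sequence of non-negative reals converging to 0 and satisfying u_m·u_{m'} ≤ C'·Σ_{j=0}^{m₀} u_{m+m'+j} for all m, m' ≥ 0, where C' ≥ 0 and m₀ ≥ 0 are fixed constants. Then u_m ≤ (m₀+1)·C' for all m. -/
/-- If `(u_m)` is non-negative, tends to `0`, and satisfies
`u_m u_{m'} ≤ C' Σ_{j=0}^{m₀} u_{m+m'+j}`, then `u_m ≤ (m₀+1) C'` for all `m`. -/
theorem bounded_of_submultiplicative_ineq (u : ℕ → ℝ) (hu0 : ∀ m, 0 ≤ u m)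
    (hlim : Filter.Tendsto u Filter.atTop (nhds 0))
    (C' : ℝ) (hC' : 0 ≤ C') (m₀ : ℕ)
    (hineq : ∀ m m' : ℕ, u m * u m' ≤ C' * ∑ j ∈ Finset.range (m₀ + 1), u (m + m' + j)) :
    ∀ m : ℕ, u m ≤ (m₀ + 1 : ℝ) * C' := by
  intro m
  have hRHS : (0:ℝ) ≤ (m₀ + 1 : ℝ) * C' := by positivity
  by_cases hpos : ∃ m₁, 0 < u m₁
  · obtain ⟨m₁, hm₁⟩ := hpos
    -- eventually u n < u m₁
    obtain ⟨N, hN⟩ := (Filter.tendsto_atTop'.1 hlim (Set.Iio (u m₁))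
      (Iio_mem_nhds hm₁))
    -- max over range (N+1)
    obtain ⟨k, hk, hkmax⟩ := (Finset.range (N+1)).exists_max_image u
      ⟨0, Finset.mem_range.2 (Nat.succ_pos N)⟩
    have hk1 : u m₁ ≤ u k := by
      rcases le_or_gt m₁ N with h | h
      · exact hkmax m₁ (Finset.mem_range.2 (Nat.lt_succ_of_le h))
      · have := hN m₁ h.le
        simp only [Set.mem_Iio] at this
        linarith
    have hmax : ∀ n, u n ≤ u k := by
      intro n
      rcases le_or_gt n N with h | h
      · exact hkmax n (Finset.mem_range.2 (Nat.lt_succ_of_le h))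
      · have := hN n h.le
        simp only [Set.mem_Iio] at this
        linarith [hk1]
    have hukpos : 0 < u k := lt_of_lt_of_le hm₁ hk1
    have h1 := hineq k k
    have h2 : ∑ j ∈ Finset.range (m₀ + 1), u (k + k + j) ≤ (m₀ + 1 : ℝ) * u k := by
      calc ∑ j ∈ Finset.range (m₀ + 1), u (k + k + j)
          ≤ ∑ _j ∈ Finset.range (m₀ + 1), u k :=
            Finset.sum_le_sum fun j _ => hmax _
        _ = (m₀ + 1 : ℝ) * u k := by simp [mul_comm]
    have h3 : u k * u k ≤ C' * ((m₀ + 1 : ℝ) * u k) :=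
      h1.trans (by nlinarith)
    have hk_le : u k ≤ (m₀ + 1 : ℝ) * C' := by nlinarith
    exact (hmax m).trans hk_le
  · push_neg at hpos
    exact (hpos m).trans hRHS
end

section
/- Let F: [0,R) → (0,∞) be differentiable and increasing with F'(r) > 0, and suppose there exist constants 0 < c ≤ C such that c·F'(r)³ ≤ F''(r) ≤ C·F'(r)³ for all r ∈ [0,R), and suppose F'(r) → ∞ as r → R⁻. Then there exist constants 0 < c' ≤ C' such that c'·(R-r)^{-1/2} ≤ F'(r) ≤ C'·(R-r)^{-1/2} for all r ∈ [0,R). -/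
/-!
Put `G = 1 / F'²`. Then `G' = -2 F'' / F'³`, so the hypothesis `F'' ≍ F'³` says exactly that
`-G'` is pinched between `2c` and `2C`, while `F' → ∞` says `G → 0` at `R⁻`. Integrating `G'`
from `r` to `R` gives `G r ≍ R - r`, i.e. `F' r ≍ (R - r)^{-1/2}`.
-/

open Set Filter Topology

section DerivBound

variable {a b M : ℝ} {G G' : ℝ → ℝ}

theorem le_mul_sub_of_neg_le_deriv_of_tendsto_zero
    (hG : ∀ r ∈ Ico a b, HasDerivAt G (G' r) r) (hG' : ∀ r ∈ Ico a b, -M ≤ G' r)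
    (hlim : Tendsto G (𝓝[<] b) (𝓝 0)) : ∀ r ∈ Ico a b, G r ≤ M * (b - r) := by
  have hderiv : ∀ r ∈ Ico a b, HasDerivAt (fun s => G s + M * s) (G' r + M) r :=
    fun r hr => (hG r hr).add (by simpa using (hasDerivAt_id r).const_mul M)
  have hmono : MonotoneOn (fun s => G s + M * s) (Ico a b) :=
    monotoneOn_of_hasDerivWithinAt_nonneg (convex_Ico a b)
      (fun r hr => (hderiv r hr).continuousAt.continuousWithinAt)
      (fun r hr => (hderiv r (interior_subset hr)).hasDerivWithinAt)
      (fun r hr => by linarith [hG' r (interior_subset hr)])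
  intro r hr
  have hlim' : Tendsto (fun s => G s + M * s) (𝓝[<] b) (𝓝 (0 + M * b)) :=
    hlim.add ((continuous_const.mul continuous_id).tendsto b |>.mono_left nhdsWithin_le_nhds)
  have hev : ∀ᶠ s in 𝓝[<] b, G r + M * r ≤ G s + M * s := by
    filter_upwards [Ioo_mem_nhdsLT_of_mem ⟨hr.2, le_rfl⟩] with s hs
    exact hmono hr ⟨hr.1.trans hs.1.le, hs.2⟩ hs.1.le
  linarith [ge_of_tendsto hlim' hev]

theorem mul_sub_le_of_deriv_le_neg_of_tendsto_zero
    (hG : ∀ r ∈ Ico a b, HasDerivAt G (G' r) r) (hG' : ∀ r ∈ Ico a b, G' r ≤ -M)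
    (hlim : Tendsto G (𝓝[<] b) (𝓝 0)) : ∀ r ∈ Ico a b, M * (b - r) ≤ G r := by
  intro r hr
  have := le_mul_sub_of_neg_le_deriv_of_tendsto_zero (G := fun s => -G s) (M := -M)
    (fun r hr => (hG r hr).neg) (fun r hr => by linarith [hG' r hr])
    (by simpa only [neg_zero] using hlim.neg) r hr
  linarith

end DerivBound

theorem HasDerivAt.inv_sq {f : ℝ → ℝ} {f' x : ℝ} (hf : HasDerivAt f f' x) (hx : f x ≠ 0) :
    HasDerivAt (fun s => (f s ^ 2)⁻¹) (-(2 * f') / f x ^ 3) x := by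
  refine ((hf.fun_pow 2).fun_inv (pow_ne_zero 2 hx)).congr_deriv ?_
  field_simp
  ring

theorem one_div_sqrt_le_of_inv_sq_le {x y : ℝ} (hx : 0 < x) (h : (x ^ 2)⁻¹ ≤ y) :
    1 / √y ≤ x := by
  have hy : 0 < y := (by positivity : 0 < (x ^ 2)⁻¹).trans_le h
  rw [div_le_iff₀ (Real.sqrt_pos.2 hy), ← Real.sqrt_sq hx.le, ← Real.sqrt_mul (sq_nonneg x),
    Real.one_le_sqrt]
  rwa [inv_le_iff_one_le_mul₀ (by positivity), mul_comm] at h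

theorem le_one_div_sqrt_of_le_inv_sq {x y : ℝ} (hx : 0 < x) (hy : 0 < y) (h : y ≤ (x ^ 2)⁻¹) :
    x ≤ 1 / √y := by
  rw [le_div_iff₀ (Real.sqrt_pos.2 hy), ← Real.sqrt_sq hx.le, ← Real.sqrt_mul (sq_nonneg x),
    Real.sqrt_le_one]
  calc x ^ 2 * y ≤ x ^ 2 * (x ^ 2)⁻¹ := by gcongr
    _ = 1 := mul_inv_cancel₀ (by positivity)

theorem inv_sq_mem_Icc_of_pow_three_bounds_deriv {a b c C : ℝ} {f f' : ℝ → ℝ}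
    (hf : ∀ r ∈ Ico a b, HasDerivAt f (f' r) r) (hpos : ∀ r ∈ Ico a b, 0 < f r)
    (hcmp : ∀ r ∈ Ico a b, c * f r ^ 3 ≤ f' r ∧ f' r ≤ C * f r ^ 3)
    (hdiv : Tendsto f (𝓝[<] b) atTop) (r : ℝ) (hr : r ∈ Ico a b) :
    (f r ^ 2)⁻¹ ∈ Icc (2 * c * (b - r)) (2 * C * (b - r)) := by
  have hG : ∀ r ∈ Ico a b, HasDerivAt (fun s => (f s ^ 2)⁻¹) (-(2 * f' r) / f r ^ 3) r :=
    fun r hr => (hf r hr).inv_sq (hpos r hr).ne'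
  have hlim : Tendsto (fun s => (f s ^ 2)⁻¹) (𝓝[<] b) (𝓝 0) :=
    ((tendsto_pow_atTop two_ne_zero).comp hdiv).inv_tendsto_atTop
  constructor
  · refine mul_sub_le_of_deriv_le_neg_of_tendsto_zero hG (fun s hs => ?_) hlim r hr
    rw [div_le_iff₀ (pow_pos (hpos s hs) 3)]
    linarith [(hcmp s hs).1]
  · refine le_mul_sub_of_neg_le_deriv_of_tendsto_zero hG (fun s hs => ?_) hlim r hr
    rw [le_div_iff₀ (pow_pos (hpos s hs) 3)]
    linarith [(hcmp s hs).2]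

theorem green_derivative_asymptotics_general (R : ℝ) (F' F'' : ℝ → ℝ)
    (hd2 : ∀ r ∈ Set.Ico (0 : ℝ) R, HasDerivAt F' (F'' r) r)
    (hF'pos : ∀ r ∈ Set.Ico (0 : ℝ) R, 0 < F' r)
    (c C : ℝ) (hc : 0 < c) (hcC : c ≤ C)
    (hcmp : ∀ r ∈ Set.Ico (0 : ℝ) R, c * (F' r) ^ 3 ≤ F'' r ∧ F'' r ≤ C * (F' r) ^ 3)
    (hdiv : Filter.Tendsto F' (nhdsWithin R (Set.Iio R)) Filter.atTop) :
    ∃ c' C' : ℝ, 0 < c' ∧ c' ≤ C' ∧ ∀ r ∈ Set.Ico (0 : ℝ) R,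
      c' / Real.sqrt (R - r) ≤ F' r ∧ F' r ≤ C' / Real.sqrt (R - r) := by
  have hC : 0 < C := hc.trans_le hcC
  refine ⟨1 / √(2 * C), 1 / √(2 * c), by positivity,
    one_div_le_one_div_of_le (by positivity) (Real.sqrt_le_sqrt (by linarith)), fun r hr => ?_⟩
  obtain ⟨hlower, hupper⟩ := inv_sq_mem_Icc_of_pow_three_bounds_deriv hd2 hF'pos hcmp hdiv r hr
  have hsplit : ∀ k : ℝ, 0 ≤ k → 1 / √k / √(R - r) = 1 / √(k * (R - r)) := fun k hk => by
    rw [Real.sqrt_mul hk, div_div]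
  have hRr : 0 < R - r := sub_pos.2 hr.2
  rw [hsplit _ (by positivity), hsplit _ (by positivity)]
  exact ⟨one_div_sqrt_le_of_inv_sq_le (hF'pos r hr) hupper,
    le_one_div_sqrt_of_le_inv_sq (hF'pos r hr) (by positivity) hlower⟩

/-- If `F : [0,R) → (0,∞)` is twice differentiable, strictly increasing with `F' > 0`,
`F'' ≍ (F')³`, and `F'(r) → ∞` as `r → R⁻`, then `F'(r) ≍ (R-r)^{-1/2}` on `[0,R)`. -/
theorem green_derivative_asymptotics (R : ℝ) (hR : 0 < R) (F F' F'' : ℝ → ℝ)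
    (hd1 : ∀ r ∈ Set.Ico (0 : ℝ) R, HasDerivAt F (F' r) r)
    (hd2 : ∀ r ∈ Set.Ico (0 : ℝ) R, HasDerivAt F' (F'' r) r)
    (hFpos : ∀ r ∈ Set.Ico (0 : ℝ) R, 0 < F r)
    (hinc : StrictMonoOn F (Set.Ico (0 : ℝ) R))
    (hF'pos : ∀ r ∈ Set.Ico (0 : ℝ) R, 0 < F' r)
    (c C : ℝ) (hc : 0 < c) (hcC : c ≤ C)
    (hcmp : ∀ r ∈ Set.Ico (0 : ℝ) R, c * (F' r) ^ 3 ≤ F'' r ∧ F'' r ≤ C * (F' r) ^ 3)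
    (hdiv : Filter.Tendsto F' (nhdsWithin R (Set.Iio R)) Filter.atTop) :
    ∃ c' C' : ℝ, 0 < c' ∧ c' ≤ C' ∧ ∀ r ∈ Set.Ico (0 : ℝ) R,
      c' / Real.sqrt (R - r) ≤ F' r ∧ F' r ≤ C' / Real.sqrt (R - r) :=
  green_derivative_asymptotics_general R F' F'' hd2 hF'pos c C hc hcC hcmp hdiv
end
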